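/- If p is any real polynomial of degree m with p(0) = 1 and A is symmetric positive definite with eigenvalues in [λ_min, λ_max], then max over eigenvalues λ of |p(λ)| is at least 1/T_m((λ_max+λ_min)/(λ_max−λ_min)) when the eigenvalues fill out the interval endpoints; consequently, among all choices of weights ω_1,…,ω_m, the Chebyshev weights minimize max_{λ ∈ [λ_min,λ_max]} |∏_{i=1}^m (1 − ω_i λ)|. -/

import Mathlib

/-!
The affine map `λ ↦ (λ_max + λ_min - 2λ) / (λ_max - λ_min)` sends `[λ_min, λ_max]` onto `[-1, 1]`
and `0` to `σ = (λ_max + λ_min) / (λ_max - λ_min) ≥ 1`. The extremal growth property of `T_m`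
(a polynomial of degree `≤ m` bounded by `M` on `[-1, 1]` is at most `M T_m` on `[1, ∞)`), applied
to `p(0) = 1`, gives `1 ≤ sup |p| · T_m(σ)`. Conversely, the Chebyshev weights are the reciprocals
of the preimages of the zeros of `T_m`, so their error polynomial is `T_m` rescaled by
`1 / T_m(σ)`, whose sup norm on the interval is `1 / T_m(σ)`.
-/

open Real Polynomial

namespace Polynomial.Chebyshev

theorem eval_T_real_eq_leadingCoeff_mul_prod (n : ℕ) (y : ℝ) :
    (T ℝ n).eval y =
      (T ℝ n).leadingCoeff * ∏ i : Fin n, (y - cos ((2 * i + 1) * π / (2 * n))) := by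
  have hinj := (Finset.range n).nodup_map_iff_injOn.mp (roots_T_real_nodup n)
  have hsplit : (T ℝ n).roots.card = (T ℝ n).natDegree := by
    rw [roots_T_real, natDegree_T, Finset.card_val, Finset.card_image_of_injOn hinj]
    simp
  conv_lhs => rw [← C_leadingCoeff_mul_prod_multiset_X_sub_C hsplit]
  rw [eval_mul, eval_C, eval_multiset_prod, roots_T_real, Multiset.map_map,
    ← Finset.prod_eq_multiset_prod, Finset.prod_image hinj,
    Fin.prod_univ_eq_prod_range (fun i => y - cos ((2 * i + 1) * π / (2 * n)))]
  simp

theorem eval_le_mul_eval_T_real_of_forall_abs_le {n : ℕ} {P : ℝ[X]} {M x : ℝ} (hx : 1 ≤ x)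
    (hP : P.degree ≤ n) (hPbnd : ∀ y ∈ Set.Icc (-1) 1, |P.eval y| ≤ M) :
    P.eval x ≤ M * (T ℝ n).eval x := by
  obtain hM | rfl := (abs_nonneg _ |>.trans (hPbnd 0 (by norm_num))).lt_or_eq'
  · have hscaled : (Polynomial.C M⁻¹ * P).eval x ≤ (T ℝ n).eval x :=
      eval_iterate_derivative_le_of_forall_abs_le_one (k := 0) hx
        ((degree_C_mul (inv_ne_zero hM.ne')).trans_le hP) fun y hy => by
          rw [eval_mul, eval_C, abs_mul, abs_inv, abs_of_pos hM]
          exact inv_mul_le_one_of_le₀ (hPbnd y hy) hM.le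
    rwa [eval_mul, eval_C, inv_mul_le_iff₀ hM] at hscaled
  · have hP0 : P = 0 := P.eq_zero_of_infinite_isRoot <|
      (Set.Icc_infinite (by norm_num : (-1 : ℝ) < 1)).mono fun y hy =>
        abs_nonpos_iff.mp (hPbnd y hy)
    simp [hP0]

theorem eval_le_mul_eval_T_real_of_le_of_forall_abs_le_Icc {n : ℕ} {P : ℝ[X]} {a b M t : ℝ}
    (hab : a < b) (ht : t ≤ a) (hP : P.degree ≤ n)
    (hPbnd : ∀ s ∈ Set.Icc a b, |P.eval s| ≤ M) :
    P.eval t ≤ M * (T ℝ n).eval ((b + a - 2 * t) / (b - a)) := by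
  have hba : 0 < b - a := sub_pos.mpr hab
  set Q := P.comp (Polynomial.C (-(b - a) / 2) * X + Polynomial.C ((b + a) / 2))
  have hQ : ∀ y, Q.eval y = P.eval ((b + a) / 2 - (b - a) / 2 * y) := fun y => by
    simp only [Q, eval_comp, eval_add, eval_mul, eval_C, eval_X]
    congr 1; ring
  have hQdeg : Q.degree ≤ n := by
    refine degree_le_of_natDegree_le (natDegree_comp_le.trans ?_)
    exact (Nat.mul_le_mul (natDegree_le_iff_degree_le.mpr hP) natDegree_linear_le).trans_eq
      (mul_one n)
  have hQt : Q.eval ((b + a - 2 * t) / (b - a)) = P.eval t := by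
    rw [hQ]; congr 1; field_simp; ring
  rw [← hQt]
  refine eval_le_mul_eval_T_real_of_forall_abs_le ?_ hQdeg fun y ⟨hy₁, hy₂⟩ => ?_
  · rw [le_div_iff₀ hba]; linarith
  · rw [hQ]
    exact hPbnd _ ⟨by nlinarith, by nlinarith⟩

theorem one_le_eval_T_real_add_div_sub {a b : ℝ} (ha : 0 ≤ a) (hab : a < b) (n : ℕ) :
    1 ≤ (T ℝ n).eval ((b + a) / (b - a)) :=
  one_le_eval_T_real _ (by rw [one_le_div (sub_pos.mpr hab)]; linarith)

theorem one_div_eval_T_real_le_of_forall_abs_le_Icc {n : ℕ} {P : ℝ[X]} {a b M : ℝ}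
    (ha : 0 ≤ a) (hab : a < b) (hP : P.degree ≤ n) (hP0 : P.eval 0 = 1)
    (hPbnd : ∀ s ∈ Set.Icc a b, |P.eval s| ≤ M) :
    1 / (T ℝ n).eval ((b + a) / (b - a)) ≤ M := by
  rw [div_le_iff₀ (one_pos.trans_le (one_le_eval_T_real_add_div_sub ha hab n)), ← hP0]
  simpa using eval_le_mul_eval_T_real_of_le_of_forall_abs_le_Icc (n := n) hab ha hP hPbnd

end Polynomial.Chebyshev

open Polynomial.Chebyshev

noncomputable def chebyshevWeight (a b : ℝ) (n i : ℕ) : ℝ :=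
  2 / (b + a + (b - a) * cos ((2 * i + 1) * π / (2 * n)))

theorem prod_one_sub_chebyshevWeight_mul {a b : ℝ} (ha : 0 < a) (hab : a < b) (n : ℕ) (t : ℝ) :
    ∏ i : Fin n, (1 - chebyshevWeight a b n i * t) =
      (T ℝ n).eval ((b + a - 2 * t) / (b - a)) / (T ℝ n).eval ((b + a) / (b - a)) := by
  have hba : 0 < b - a := sub_pos.mpr hab
  have hlc : (T ℝ n).leadingCoeff ≠ 0 := by simp [leadingCoeff_T]
  -- reflecting `y ↦ -y` makes the nodes enter as `+ cos`, as in the weights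
  rw [← neg_neg ((b + a - 2 * t) / (b - a)), ← neg_neg ((b + a) / (b - a)), T_eval_neg,
    T_eval_neg ℝ n (-((b + a) / (b - a))), mul_div_mul_left _ _ (by simp),
    eval_T_real_eq_leadingCoeff_mul_prod, eval_T_real_eq_leadingCoeff_mul_prod,
    mul_div_mul_left _ _ hlc, ← Finset.prod_div_distrib]
  refine Finset.prod_congr rfl fun i _ => ?_
  rw [chebyshevWeight]
  have hnode := neg_one_le_cos ((2 * i + 1) * π / (2 * n))
  generalize cos ((2 * i + 1) * π / (2 * n)) = x at hnode ⊢
  have hD : 0 < b + a + (b - a) * x := by nlinarith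
  have hshift : -((b + a) / (b - a)) - x = -(b + a + (b - a) * x) / (b - a) := by
    field_simp; ring
  rw [hshift]
  field_simp
  ring

theorem abs_prod_one_sub_chebyshevWeight_mul_le {a b t : ℝ} (ha : 0 < a) (hab : a < b) (n : ℕ)
    (ht : t ∈ Set.Icc a b) :
    |∏ i : Fin n, (1 - chebyshevWeight a b n i * t)| ≤ 1 / (T ℝ n).eval ((b + a) / (b - a)) := by
  have hba : 0 < b - a := sub_pos.mpr hab
  have hT := one_pos.trans_le (one_le_eval_T_real_add_div_sub ha.le hab n)
  rw [prod_one_sub_chebyshevWeight_mul ha hab, abs_div, abs_of_pos hT]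
  refine div_le_div_of_nonneg_right (abs_eval_T_real_le_one _ (abs_le.mpr ⟨?_, ?_⟩)) hT.le
  · rw [le_div_iff₀ hba]; linarith [ht.2]
  · rw [div_le_iff₀ hba]; linarith [ht.1]

theorem natDegree_prod_one_sub_C_mul_X_le {R ι : Type*} [CommRing R] (s : Finset ι)
    (ω : ι → R) : (∏ i ∈ s, (1 - Polynomial.C (ω i) * X)).natDegree ≤ s.card := by
  refine (natDegree_prod_le _ _).trans
    ((Finset.sum_le_card_nsmul _ _ 1 fun i _ => ?_).trans_eq (smul_eq_mul _ _ |>.trans (mul_one _)))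
  compute_degree

theorem chebyshev_weights_optimal_general
    (m : ℕ) (lmin lmax : ℝ) (h0 : 0 < lmin) (hll : lmin < lmax)
    (x : Fin m → ℝ) (hx : ∀ i : Fin m, x i = Real.cos ((2 * (i : ℕ) + 1) * π / (2 * m)))
    (ωc : Fin m → ℝ) (hωc : ∀ i, ωc i = 2 / (lmax + lmin + (lmax - lmin) * x i)) :
    (∀ p : Polynomial ℝ, p.degree ≤ m → p.eval 0 = 1 →
        1 / (Polynomial.Chebyshev.T ℝ (m : ℤ)).eval ((lmax + lmin) / (lmax - lmin)) ≤
          sSup ((fun lam => |p.eval lam|) '' Set.Icc lmin lmax)) ∧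
    (∀ ω : Fin m → ℝ,
        sSup ((fun lam => |∏ i : Fin m, (1 - ωc i * lam)|) '' Set.Icc lmin lmax) ≤
          sSup ((fun lam => |∏ i : Fin m, (1 - ω i * lam)|) '' Set.Icc lmin lmax)) := by
  have hlower (p : ℝ[X]) (hp : p.degree ≤ m) (hp0 : p.eval 0 = 1) :
      1 / (T ℝ m).eval ((lmax + lmin) / (lmax - lmin)) ≤
        sSup ((fun lam => |p.eval lam|) '' Set.Icc lmin lmax) :=
    one_div_eval_T_real_le_of_forall_abs_le_Icc h0.le hll hp hp0 fun t ht =>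
      le_csSup ((isCompact_Icc.image (by fun_prop)).bddAbove) (Set.mem_image_of_mem _ ht)
  refine ⟨hlower, fun ω => ?_⟩
  have hωc' (i : Fin m) : ωc i = chebyshevWeight lmin lmax m i := by rw [hωc, hx]; rfl
  calc sSup ((fun lam => |∏ i : Fin m, (1 - ωc i * lam)|) '' Set.Icc lmin lmax)
      ≤ 1 / (T ℝ m).eval ((lmax + lmin) / (lmax - lmin)) := by
        refine csSup_le ((Set.nonempty_Icc.mpr hll.le).image _) ?_
        rintro _ ⟨t, ht, rfl⟩
        simpa only [hωc'] using abs_prod_one_sub_chebyshevWeight_mul_le h0 hll m ht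
    _ ≤ sSup ((fun lam => |∏ i : Fin m, (1 - ω i * lam)|) '' Set.Icc lmin lmax) := by
        have hPω (t : ℝ) : (∏ i, (1 - Polynomial.C (ω i) * X)).eval t = ∏ i, (1 - ω i * t) := by
          simp [eval_prod]
        have hdeg : (∏ i, (1 - Polynomial.C (ω i) * X)).natDegree ≤ m := by
          simpa using natDegree_prod_one_sub_C_mul_X_le Finset.univ ω
        simpa only [hPω] using hlower _ (degree_le_of_natDegree_le hdeg) (by simp [hPω])

/-- Any real polynomial `p` with `deg p ≤ m` and `p(0) = 1` has sup norm on
`[λ_min, λ_max]` at least `1/T_m((λ_max+λ_min)/(λ_max−λ_min))`; consequently, the Chebyshev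
weights minimize `sup_{λ ∈ [λ_min,λ_max]} |∏ (1 − ω_i λ)|` over all choices of weights. -/
theorem chebyshev_weights_optimal
    (m : ℕ) (hm : 0 < m) (lmin lmax : ℝ) (h0 : 0 < lmin) (hll : lmin < lmax)
    (x : Fin m → ℝ) (hx : ∀ i : Fin m, x i = Real.cos ((2 * (i : ℕ) + 1) * π / (2 * m)))
    (ωc : Fin m → ℝ) (hωc : ∀ i, ωc i = 2 / (lmax + lmin + (lmax - lmin) * x i)) :
    (∀ p : Polynomial ℝ, p.degree ≤ m → p.eval 0 = 1 →
        1 / (Polynomial.Chebyshev.T ℝ (m : ℤ)).eval ((lmax + lmin) / (lmax - lmin)) ≤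
          sSup ((fun lam => |p.eval lam|) '' Set.Icc lmin lmax)) ∧
    (∀ ω : Fin m → ℝ,
        sSup ((fun lam => |∏ i : Fin m, (1 - ωc i * lam)|) '' Set.Icc lmin lmax) ≤
          sSup ((fun lam => |∏ i : Fin m, (1 - ω i * lam)|) '' Set.Icc lmin lmax)) :=
  chebyshev_weights_optimal_general m lmin lmax h0 hll x hx ωc hωc
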